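/- arXiv:2410.11787 — 5 statements merged into one kernel-verified Lean document; each statement's English description precedes it below -/
import Mathlib

section
/- Let p, q : ℕ → ℕ be sequences such that p(n+1) − p(n) → +∞ and q(n+1) − q(n) → +∞ as n → ∞. Then there exist a probability space (X, μ), invertible measure-preserving transformations S, T of (X, μ), and a measurable set C ⊆ X such that the sequence of averages (1/N) · Σ_{n=1}^{N} μ(S^{p(n)} C ∩ T^{q(n)} C) does not converge as N → ∞. -/
/-!
Take `X = Bool^ℤ` with the Bernoulli(1/2) product measure and `C = {x | x 0 = true}`. A
permutation `σ` of `ℤ` permutes the coordinates measure-preservingly, and the `a`-th image of `C`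
is the cylinder `{x | x (σ^a 0) = true}`; so `μ (S^a C ∩ T^b C)` is `1/2` when `σ^a 0 = τ^b 0`
and `1/4` otherwise. Let `σ` walk through `0, 2, 4, …` and let `τ` walk along an injective path
through `0` that sits at `2 p(n)` at time `q(n)` when `n` lies in a dyadic block
`(2^(2k+1), 2^(2k+2)]`, and at an odd integer otherwise; eventual strict monotonicity of `p` and
`q` keeps the path injective. The averaged sequence is then `1/2` and `1/4` on alternate dyadic
blocks, while `(1/N) ∑_{N < n ≤ 2N} a n = 2 A(2N) - A(N)` for the Cesàro means `A`, so
convergence of `A` would force all block averages to the same limit.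
-/

open MeasureTheory Filter Topology Function Set

theorem Function.Injective.injective_extend {α β γ : Type*} {f : α → β} {g : α → γ}
    {e' : β → γ} (hf : Injective f) (hg : Injective g) (he : InjOn e' (range f)ᶜ)
    (hge : ∀ a b, b ∉ range f → g a ≠ e' b) : Injective (extend f g e') := by
  intro b₁ b₂ h
  by_cases h₁ : b₁ ∈ range f <;> by_cases h₂ : b₂ ∈ range f
  · obtain ⟨a₁, rfl⟩ := h₁
    obtain ⟨a₂, rfl⟩ := h₂
    rw [hf.extend_apply, hf.extend_apply] at h
    rw [hg h]
  · obtain ⟨a₁, rfl⟩ := h₁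
    rw [hf.extend_apply, extend_apply' _ _ _ (by simpa using h₂)] at h
    exact absurd h (hge a₁ b₂ h₂)
  · obtain ⟨a₂, rfl⟩ := h₂
    rw [hf.extend_apply, extend_apply' _ _ _ (by simpa using h₁)] at h
    exact absurd h.symm (hge a₂ b₁ h₁)
  · rw [extend_apply' _ _ _ (by simpa using h₁), extend_apply' _ _ _ (by simpa using h₂)] at h
    exact he h₁ h₂ h

namespace Equiv.Perm

variable {α : Type*}

open scoped Classical in
noncomputable def shiftAlong (v : ℤ → α) (hv : Injective v) : Perm α :=
  (Equiv.addRight (1 : ℤ)).extendDomain (Equiv.ofInjective v hv)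

theorem shiftAlong_pow_apply {v : ℤ → α} (hv : Injective v) (a : ℕ) (b : ℤ) :
    (shiftAlong v hv ^ a) (v b) = v (b + a) := by
  classical
  rw [shiftAlong, ← extendDomain_pow]
  simpa using extendDomain_apply_image (Equiv.addRight (1 : ℤ) ^ a) (Equiv.ofInjective v hv) b

end Equiv.Perm

section CoordinatePermutation

variable {ι α : Type*} [MeasurableSpace α]

theorem image_piCongrLeft_setOf_mem (e : ι ≃ ι) (i : ι) (s : Set α) :
    MeasurableEquiv.piCongrLeft (fun _ ↦ α) e '' {x | x i ∈ s} = {x | x (e i) ∈ s} := by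
  rw [MeasurableEquiv.image_eq_preimage_symm]
  ext y
  simp [MeasurableEquiv.piCongrLeft]

theorem iterate_piCongrLeft_image_setOf_mem (σ : Equiv.Perm ι) (a : ℕ) (i : ι) (s : Set α) :
    (⇑(MeasurableEquiv.piCongrLeft (fun _ ↦ α) σ))^[a] '' {x | x i ∈ s} =
      {x | x ((σ ^ a) i) ∈ s} := by
  induction a with
  | zero => simp
  | succ a ih =>
    rw [iterate_succ', image_comp, ih, image_piCongrLeft_setOf_mem, pow_succ',
      Equiv.Perm.mul_apply]

variable (ν : Measure α) [IsProbabilityMeasure ν]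

theorem measurePreserving_piCongrLeft_infinitePi (e : ι ≃ ι) :
    MeasurePreserving (MeasurableEquiv.piCongrLeft (fun _ ↦ α) e)
      (Measure.infinitePi fun _ ↦ ν) (Measure.infinitePi fun _ ↦ ν) :=
  ⟨by fun_prop, Measure.infinitePi_map_piCongrLeft (fun _ ↦ ν) e⟩

theorem infinitePi_setOf_mem_inter [DecidableEq ι] {s : Set α} (hs : MeasurableSet s)
    (i j : ι) :
    Measure.infinitePi (fun _ ↦ ν) ({x | x i ∈ s} ∩ {x | x j ∈ s}) =
      if i = j then ν s else ν s ^ 2 := by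
  have : {x : ι → α | x i ∈ s} ∩ {x | x j ∈ s} = Set.pi ({i, j} : Finset ι) fun _ ↦ s := by
    ext x; simp
  rw [this, Measure.infinitePi_pi _ fun _ _ ↦ hs]
  split_ifs with h
  · simp [h]
  · simp [Finset.prod_pair h, sq]

theorem infinitePi_iterate_piCongrLeft_image_inter [DecidableEq ι] {s : Set α}
    (hs : MeasurableSet s) (σ τ : Equiv.Perm ι) (a b : ℕ) (i : ι) :
    Measure.infinitePi (fun _ ↦ ν)
        ((⇑(MeasurableEquiv.piCongrLeft (fun _ ↦ α) σ))^[a] '' {x | x i ∈ s} ∩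
          (⇑(MeasurableEquiv.piCongrLeft (fun _ ↦ α) τ))^[b] '' {x | x i ∈ s}) =
      if (σ ^ a) i = (τ ^ b) i then ν s else ν s ^ 2 := by
  rw [iterate_piCongrLeft_image_setOf_mem, iterate_piCongrLeft_image_setOf_mem,
    infinitePi_setOf_mem_inter ν hs]

end CoordinatePermutation

section Cesaro

noncomputable def cesaroMean (a : ℕ → ℝ) (N : ℕ) : ℝ :=
  (1 / (N : ℝ)) * ∑ n ∈ Finset.Icc 1 N, a n

theorem two_mul_cesaroMean_two_mul_sub (a : ℕ → ℝ) {N : ℕ} (hN : N ≠ 0) :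
    2 * cesaroMean a (2 * N) - cesaroMean a N =
      (1 / (N : ℝ)) * ∑ n ∈ Finset.Ioc N (2 * N), a n := by
  have hIcc : ∀ M, Finset.Icc 1 M = Finset.Ioc 0 M := Finset.Icc_add_one_left_eq_Ioc 0
  simp only [cesaroMean, hIcc,
    ← Finset.sum_Ioc_consecutive a (Nat.zero_le N) (by omega : N ≤ 2 * N)]
  have : (N : ℝ) ≠ 0 := by exact_mod_cast hN
  push_cast
  field_simp
  ring

theorem tendsto_blockMean_of_tendsto_cesaroMean {a : ℕ → ℝ} {l : ℝ}
    (h : Tendsto (cesaroMean a) atTop (𝓝 l)) :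
    Tendsto (fun N : ℕ ↦ (1 / (N : ℝ)) * ∑ n ∈ Finset.Ioc N (2 * N), a n) atTop (𝓝 l) := by
  have h2 : Tendsto (fun N ↦ cesaroMean a (2 * N)) atTop (𝓝 l) :=
    h.comp (tendsto_id.const_mul_atTop' two_pos)
  have := (h2.const_mul 2).sub h
  rw [show 2 * l - l = l by ring] at this
  refine this.congr' ?_
  filter_upwards [eventually_ne_atTop 0] with N hN using two_mul_cesaroMean_two_mul_sub a hN

theorem eq_of_tendsto_cesaroMean {a : ℕ → ℝ} {l x : ℝ} (h : Tendsto (cesaroMean a) atTop (𝓝 l))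
    {N : ℕ → ℕ} (hN : Tendsto N atTop atTop)
    (hx : ∀ᶠ k in atTop, ∀ n ∈ Finset.Ioc (N k) (2 * N k), a n = x) : l = x := by
  refine tendsto_nhds_unique ((tendsto_blockMean_of_tendsto_cesaroMean h).comp hN)
    (tendsto_const_nhds.congr' ?_)
  filter_upwards [hx, hN.eventually_ne_atTop 0] with k hk hk0
  have : (N k : ℝ) ≠ 0 := by exact_mod_cast hk0
  rw [comp_apply, Finset.sum_congr rfl hk, Finset.sum_const, Nat.card_Ioc, nsmul_eq_mul,
    show 2 * N k - N k = N k by omega]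
  field_simp

theorem Nat.clog_two_eq_of_mem_Ioc {j n : ℕ} (hn : n ∈ Finset.Ioc (2 ^ j) (2 * 2 ^ j)) :
    Nat.clog 2 n = j + 1 := by
  rw [Finset.mem_Ioc] at hn
  refine le_antisymm (Nat.clog_le_of_le_pow (by rw [pow_succ']; exact hn.2)) ?_
  exact (Nat.lt_clog_iff_pow_lt one_lt_two).2 hn.1

theorem not_tendsto_cesaroMean_of_clog_parity {a : ℕ → ℝ} {x y : ℝ} (hxy : x ≠ y)
    (ha : ∀ᶠ n in atTop, a n = if Even (Nat.clog 2 n) then x else y) :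
    ¬ ∃ l, Tendsto (cesaroMean a) atTop (𝓝 l) := by
  rintro ⟨l, hl⟩
  obtain ⟨n₁, hn₁⟩ := eventually_atTop.1 ha
  have hblock : ∀ j, n₁ ≤ 2 ^ j → ∀ n ∈ Finset.Ioc (2 ^ j) (2 * 2 ^ j),
      a n = if Even (j + 1) then x else y := fun j hj n hn ↦ by
    rw [hn₁ n (hj.trans (Finset.mem_Ioc.1 hn).1.le), Nat.clog_two_eq_of_mem_Ioc hn]
  have hpow : ∀ c, Tendsto (fun k ↦ 2 ^ (2 * k + c)) atTop atTop := fun c ↦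
    (tendsto_pow_atTop_atTop_of_one_lt one_lt_two).comp
      (tendsto_atTop_mono (fun k ↦ by simp only [id]; omega) tendsto_id)
  have hx : l = x := eq_of_tendsto_cesaroMean hl (hpow 1) <| by
    filter_upwards [(hpow 1).eventually_ge_atTop n₁] with k hk n hn
    simpa [parity_simps] using hblock _ hk n hn
  have hy : l = y := eq_of_tendsto_cesaroMean hl (hpow 0) <| by
    filter_upwards [(hpow 0).eventually_ge_atTop n₁] with k hk n hn
    simpa [parity_simps] using hblock _ hk n hn
  exact hxy (hx.symm.trans hy)

end Cesaro

theorem eventually_strictMonoOn_Ici_of_tendsto_sub {f : ℕ → ℕ}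
    (hf : Tendsto (fun n ↦ (f (n + 1) : ℤ) - f n) atTop atTop) :
    ∀ᶠ n₀ in atTop, StrictMonoOn f (Ici n₀) := by
  obtain ⟨n₁, hn₁⟩ := eventually_atTop.1 (hf.eventually_ge_atTop 1)
  refine eventually_atTop.2 ⟨n₁, fun n₀ hn₀ ↦ strictMonoOn_Ici_of_pred_lt fun m hm ↦ ?_⟩
  have := hn₁ (m - 1) (by omega)
  rw [Nat.sub_add_cancel (by omega)] at this
  rw [Order.pred_eq_sub_one]
  omega

theorem StrictMonoOn.ne_zero_of_lt {f : ℕ → ℕ} {n₀ n : ℕ} (hf : StrictMonoOn f (Ici n₀))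
    (hn : n₀ < n) : f n ≠ 0 :=
  ((f n₀).zero_le.trans_lt (hf self_mem_Ici hn.le hn)).ne'

theorem exists_injective_path_hits_iff_mem {p q : ℕ → ℕ} {D G : Set ℕ} (hGD : G ⊆ D)
    (hp : InjOn p G) (hq : InjOn q D) (hp0 : ∀ n ∈ G, p n ≠ 0) (hq0 : ∀ n ∈ D, q n ≠ 0) :
    ∃ v : ℤ → ℤ, Injective v ∧ v 0 = 0 ∧ ∀ n ∈ D, (2 * p n = v (q n) ↔ n ∈ G) := by
  set f : G → ℤ := fun n ↦ q n
  have hf : Injective f := fun m n h ↦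
    Subtype.ext (hq (hGD m.2) (hGD n.2) (by simpa [f] using h))
  have hf0 : (0 : ℤ) ∉ range f := fun ⟨n, hn⟩ ↦ hq0 n (hGD n.2) (by simpa [f] using hn)
  have hfD : ∀ n ∈ D, (q n : ℤ) ∈ range f → n ∈ G := by
    rintro n hn ⟨m, hm⟩
    rw [← hq (hGD m.2) hn (by simpa [f] using hm)]
    exact m.2
  set e' : ℤ → ℤ := fun b ↦ if b = 0 then 0 else 2 * b + 1
  refine ⟨extend f (fun n ↦ 2 * (p n : ℤ)) e', hf.injective_extend ?_ ?_ ?_,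
    extend_apply' _ _ _ (by simpa using hf0), fun n hn ↦ ⟨fun h ↦ ?_,
      fun h ↦ (hf.extend_apply (fun n : G ↦ 2 * (p n : ℤ)) e' ⟨n, h⟩).symm⟩⟩
  · intro m n h
    exact Subtype.ext (hp m.2 n.2 (by simpa using h))
  · intro b₁ _ b₂ _ h
    simp only [e'] at h
    split_ifs at h <;> omega
  · intro n b _
    have := hp0 n n.2
    simp only [e']
    split_ifs <;> omega
  · by_contra hnG
    rw [extend_apply' _ _ _ (fun ⟨m, hm⟩ ↦ hnG (hfD n hn ⟨m, hm⟩))] at h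
    have := hq0 n hn
    simp only [e'] at h
    split_ifs at h <;> omega

/-- If `p(n+1) - p(n) → ∞` and `q(n+1) - q(n) → ∞`, there exist a probability space,
invertible measure-preserving transformations `S, T` and a measurable set `C` such that the
Cesàro averages of `μ(S^{p(n)} C ∩ T^{q(n)} C)` do not converge. -/
theorem divergent_averages (p q : ℕ → ℕ)
    (hp : Tendsto (fun n => (p (n + 1) : ℤ) - (p n : ℤ)) atTop atTop)
    (hq : Tendsto (fun n => (q (n + 1) : ℤ) - (q n : ℤ)) atTop atTop) :
    ∃ (X : Type) (_ : MeasurableSpace X) (μ : Measure X), IsProbabilityMeasure μ ∧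
      ∃ (S T : X ≃ᵐ X), MeasurePreserving S μ μ ∧ MeasurePreserving T μ μ ∧
        ∃ C : Set X, MeasurableSet C ∧
          ¬ ∃ l : ℝ, Tendsto
            (fun N : ℕ => (1 / (N : ℝ)) *
              ∑ n ∈ Finset.Icc 1 N, (μ ((⇑S)^[p n] '' C ∩ (⇑T)^[q n] '' C)).toReal)
            atTop (𝓝 l) := by
  obtain ⟨n₀, hpm, hqm⟩ := ((eventually_strictMonoOn_Ici_of_tendsto_sub hp).and
    (eventually_strictMonoOn_Ici_of_tendsto_sub hq)).exists
  set G := {n | n₀ < n ∧ Even (Nat.clog 2 n)}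
  obtain ⟨v, hv, hv0, hvG⟩ := exists_injective_path_hits_iff_mem (D := Ioi n₀) (G := G)
    (fun n hn ↦ hn.1) (hpm.injOn.mono fun n hn ↦ le_of_lt hn.1)
    (hqm.injOn.mono Ioi_subset_Ici_self) (fun n hn ↦ hpm.ne_zero_of_lt hn.1)
    (fun n hn ↦ hqm.ne_zero_of_lt hn)
  have h2 : Injective (fun b : ℤ ↦ 2 * b) := mul_right_injective₀ two_ne_zero
  set ν : Measure Bool := (PMF.uniformOfFintype Bool).toMeasure
  set σ := Equiv.Perm.shiftAlong _ h2
  set τ := Equiv.Perm.shiftAlong v hv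
  refine ⟨ℤ → Bool, inferInstance, Measure.infinitePi fun _ ↦ ν, inferInstance,
    MeasurableEquiv.piCongrLeft (fun _ ↦ Bool) σ, MeasurableEquiv.piCongrLeft (fun _ ↦ Bool) τ,
    measurePreserving_piCongrLeft_infinitePi ν σ, measurePreserving_piCongrLeft_infinitePi ν τ,
    {x | x 0 ∈ ({true} : Set Bool)}, measurable_pi_apply 0 (measurableSet_singleton true), ?_⟩
  refine not_tendsto_cesaroMean_of_clog_parity (x := 1 / 2) (y := 1 / 4) (by norm_num) ?_
  filter_upwards [eventually_gt_atTop n₀] with n hn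
  have hσ : (σ ^ p n) 0 = 2 * p n := by simpa using Equiv.Perm.shiftAlong_pow_apply h2 (p n) 0
  have hτ : (τ ^ q n) 0 = v (q n) := by
    simpa [hv0] using Equiv.Perm.shiftAlong_pow_apply hv (q n) 0
  have hν : ν {true} = 1 / 2 := by simp [ν]
  rw [infinitePi_iterate_piCongrLeft_image_inter ν (measurableSet_singleton true), hσ, hτ, hν]
  simp only [hvG n hn, G, mem_ofPred_eq, hn, true_and]
  split_ifs <;> norm_num
end

section
/- Let p, q : ℕ → ℕ be sequences such that p(n+1) − p(n) → +∞ and q(n+1) − q(n) → +∞ as n → ∞. Then there exist a σ-finite measure space (X, μ), invertible measure-preserving transformations 𝐒, 𝐏 of (X, μ), a measurable set A with 0 < μ(A) < ∞, and a strictly increasing sequence (N_j) of positive integers with N_j / N_{j+1} → 0, such that, setting 𝐓 = 𝐏 ∘ 𝐒 ∘ 𝐏⁻¹, one has (1/N_{2k}) · Σ_{n=1}^{N_{2k}} μ(𝐒^{p(n)} A ∩ 𝐓^{q(n)} A) → μ(A) and (1/N_{2k+1}) · Σ_{n=1}^{N_{2k+1}} μ(𝐒^{p(n)} A ∩ 𝐓^{q(n)}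 A) → 0 as k → ∞. -/
/-!
Work on `ℤ × ℤ` with counting measure, `𝐒 (x, y) = (x + 1, y)` and `A = {0}`, so that
`𝐒^{p(n)} A = {(p n, 0)}`. If `𝐏 (0, 1) = 0`, then `𝐓^{q(n)} A = {𝐏 (q n, 1)}`, so the `n`-th
correlation is `1` or `0` according as `𝐏 (q n, 1) = (p n, 0)` or not. The growth hypotheses make
`p` and `q` strictly increasing and positive beyond some `n₀`; hence there is an involution `𝐏`
exchanging `(q n, 1)` and `(p n, 0)` for exactly the `n ≥ n₀` in a prescribed set `E`, and the
correlations are the indicator of `E` beyond `n₀`. Taking for `E` the union of the blocks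
`(N (2k+1), N (2k+2)]` with `N j = (j + n₀ + 1)!`, each block swamps everything before it, so the
averages tend to `1` along `N (2k)` and to `0` along `N (2k+1)`.
-/

open MeasureTheory Filter Topology Function Set

theorem eventually_strictMonoOn_Ici_and_pos {f : ℕ → ℕ}
    (hf : Tendsto (fun n => (f (n + 1) : ℤ) - (f n : ℤ)) atTop atTop) :
    ∀ᶠ n₀ in atTop, StrictMonoOn f (Ici n₀) ∧ ∀ n ≥ n₀, 0 < f n := by
  obtain ⟨m, hm⟩ := eventually_atTop.1 (hf.eventually_ge_atTop 1)
  have hmono : StrictMonoOn f (Ici m) :=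
    strictMonoOn_of_lt_succ ordConnected_Ici fun n _ hn _ => by
      have := hm n hn
      rw [Order.succ_eq_add_one]
      omega
  filter_upwards [eventually_gt_atTop m] with n₀ hn₀
  refine ⟨hmono.mono (Ici_subset_Ici.2 hn₀.le), fun n hn => ?_⟩
  exact (Nat.zero_le _).trans_lt (hmono (mem_Ici.2 le_rfl) (mem_Ici.2 (by omega)) (by omega))

namespace Equiv.Perm

variable {α ι : Type*} {a b : ι → α}

open scoped Classical in
noncomputable def swapPairs (a b : ι → α) (h : Injective (Sum.elim a b)) : Perm α :=
  extendDomain (Equiv.sumComm ι ι) (Equiv.ofInjective _ h)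

variable (h : Injective (Sum.elim a b))

theorem swapPairs_apply_left (i : ι) : swapPairs a b h (a i) = b i := by
  classical
  simpa [swapPairs] using
    extendDomain_apply_image (Equiv.sumComm ι ι) (Equiv.ofInjective _ h) (.inl i)

theorem swapPairs_apply_of_notMem {x : α} (ha : x ∉ range a) (hb : x ∉ range b) :
    swapPairs a b h x = x := by
  classical
  exact extendDomain_apply_not_subtype _ _ (by simp [Set.Sum.elim_range, ha, hb])

end Equiv.Perm

def MeasurableEquiv.ofDiscrete {α β : Type*} [MeasurableSpace α] [MeasurableSpace β]
    [DiscreteMeasurableSpace α] [DiscreteMeasurableSpace β] (e : α ≃ β) : α ≃ᵐ β :=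
  ⟨e, .of_discrete, .of_discrete⟩

theorem MeasurableEquiv.measurePreserving_count {α β : Type*} [MeasurableSpace α]
    [MeasurableSpace β] [MeasurableSingletonClass α] [MeasurableSingletonClass β] (e : α ≃ᵐ β) :
    MeasurePreserving e Measure.count Measure.count :=
  ⟨e.measurable, by
    ext s _
    rw [e.map_apply, ← e.image_symm, Measure.count_injective_image e.symm.injective]⟩

theorem MeasurableEquiv.conj_iterate_apply {α : Type*} [MeasurableSpace α] (S P : α ≃ᵐ α)
    (n : ℕ) (x : α) : (⇑(P.symm.trans (S.trans P)))^[n] (P x) = P (S^[n] x) :=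
  (Semiconj.iterate_right (f := P) (fun y => by simp) n x).symm

def shiftFst : ℤ × ℤ ≃ᵐ ℤ × ℤ := .ofDiscrete (Equiv.addRight (1, 0))

theorem shiftFst_iterate_apply (k : ℕ) (x : ℤ × ℤ) : (⇑shiftFst)^[k] x = x + ((k : ℤ), 0) := by
  change (· + ((1 : ℤ), (0 : ℤ)))^[k] x = _
  simp

theorem MeasureTheory.Measure.count_singleton_inter_singleton {α : Type*} [MeasurableSpace α]
    [MeasurableSingletonClass α] [DecidableEq α] (x y : α) :
    Measure.count ({x} ∩ {y} : Set α) = if y = x then 1 else 0 := by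
  split_ifs with h <;> simp [h]

theorem count_shiftFst_iterate_inter_conj_iterate (P : ℤ × ℤ ≃ᵐ ℤ × ℤ) (hP : P (0, 1) = 0)
    (k m : ℕ) :
    Measure.count ((⇑shiftFst)^[k] '' {0} ∩ (⇑(P.symm.trans (shiftFst.trans P)))^[m] '' {0}) =
      if P ((m : ℤ), 1) = ((k : ℤ), 0) then 1 else 0 := by
  have hT : (⇑(P.symm.trans (shiftFst.trans P)))^[m] 0 = P ((m : ℤ), 1) := by
    rw [← hP, MeasurableEquiv.conj_iterate_apply, shiftFst_iterate_apply]
    simp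
  rw [image_singleton, image_singleton, hT, shiftFst_iterate_apply, zero_add,
    Measure.count_singleton_inter_singleton]

/-- Indexing by `Option E` lets `none` supply the base pair `(0, 1) ↔ (0, 0)` next to the pairs
`(q n, 1) ↔ (p n, 0)`, `n ∈ E`. -/
def levelPoint (f : ℕ → ℕ) (E : Set ℕ) (c : ℤ) (i : Option E) : ℤ × ℤ :=
  (i.elim 0 fun n => (f n : ℤ), c)

theorem levelPoint_injective {f : ℕ → ℕ} {E : Set ℕ} (hf : InjOn f E) (hf0 : ∀ n ∈ E, f n ≠ 0)
    (c : ℤ) : Injective (levelPoint f E c) := by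
  rintro (_ | ⟨m, hm⟩) (_ | ⟨n, hn⟩) h <;> simp only [levelPoint, Option.elim, Prod.mk.injEq,
    and_true, Nat.cast_inj, Option.some.injEq, Subtype.mk.injEq] at h ⊢
  · exact (hf0 n hn (by omega)).elim
  · exact (hf0 m hm (by omega)).elim
  · exact hf hm hn h

theorem exists_perm_apply_eq_iff_mem {p q : ℕ → ℕ} {s E : Set ℕ} (hp : InjOn p s)
    (hq : InjOn q s) (hp0 : ∀ n ∈ s, p n ≠ 0) (hq0 : ∀ n ∈ s, q n ≠ 0) (hE : E ⊆ s) :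
    ∃ σ : Equiv.Perm (ℤ × ℤ), σ (0, 1) = 0 ∧
      ∀ n ∈ s, (σ ((q n : ℤ), 1) = ((p n : ℤ), 0) ↔ n ∈ E) := by
  have hinj : Injective (Sum.elim (levelPoint q E 1) (levelPoint p E 0)) :=
    (levelPoint_injective (hq.mono hE) (fun n hn => hq0 n (hE hn)) 1).sumElim
      (levelPoint_injective (hp.mono hE) (fun n hn => hp0 n (hE hn)) 0) (by simp [levelPoint])
  refine ⟨.swapPairs _ _ hinj, Equiv.Perm.swapPairs_apply_left hinj none, fun n hn =>
    ⟨fun h => ?_, fun hnE => Equiv.Perm.swapPairs_apply_left hinj (some ⟨n, hnE⟩)⟩⟩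
  by_contra hnE
  rw [Equiv.Perm.swapPairs_apply_of_notMem hinj ?_ (by simp [levelPoint])] at h
  · simp at h
  rintro ⟨_ | ⟨m, hm⟩, h⟩ <;> simp only [levelPoint, Option.elim, Prod.mk.injEq, and_true] at h
  · exact hq0 n hn (by omega)
  · exact hnE (hq (hE hm) hn (by omega) ▸ hm)

def oddBlocks (N : ℕ → ℕ) : Set ℕ := ⋃ k, Ioc (N (2 * k + 1)) (N (2 * k + 2))

theorem notMem_oddBlocks {N : ℕ → ℕ} (hN : Monotone N) {k n : ℕ} (h₁ : N (2 * k) < n)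
    (h₂ : n ≤ N (2 * k + 1)) : n ∉ oddBlocks N := by
  simp only [oddBlocks, mem_iUnion, not_exists]
  intro j hj
  exact disjoint_left.1 (hN.pairwise_disjoint_on_Ioc_succ (show 2 * k ≠ 2 * j + 1 by omega))
    ⟨h₁, h₂⟩ hj

section Averages

variable {u : ℕ → ℝ} {C : ℝ}

theorem sum_Icc_le_mul (huC : ∀ n, u n ≤ C) (b : ℕ) : ∑ n ∈ Finset.Icc 1 b, u n ≤ C * b := by
  simpa [mul_comm] using Finset.sum_le_card_nsmul (Finset.Icc 1 b) u C fun n _ => huC n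

theorem mul_sub_le_sum_Icc_of_eq_on_Ioc (hu : ∀ n, 0 ≤ u n) {a b : ℕ} (hab : a ≤ b)
    (hblock : ∀ n, a < n → n ≤ b → u n = C) :
    C * ((b : ℝ) - a) ≤ ∑ n ∈ Finset.Icc 1 b, u n := calc
  C * ((b : ℝ) - a) = ∑ n ∈ Finset.Ioc a b, u n := by
    rw [Finset.sum_congr rfl fun n hn => hblock n (Finset.mem_Ioc.1 hn).1 (Finset.mem_Ioc.1 hn).2,
      Finset.sum_const, Nat.card_Ioc, nsmul_eq_mul, Nat.cast_sub hab, mul_comm]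
  _ ≤ ∑ n ∈ Finset.Icc 1 b, u n :=
    Finset.sum_le_sum_of_subset_of_nonneg (fun n hn => by
      simp only [Finset.mem_Ioc, Finset.mem_Icc] at hn ⊢
      omega) fun n _ _ => hu n

theorem sum_Icc_le_mul_of_eq_zero_on_Ioc (hu : ∀ n, 0 ≤ u n) (huC : ∀ n, u n ≤ C) {a b : ℕ}
    (hblock : ∀ n, a < n → n ≤ b → u n = 0) :
    ∑ n ∈ Finset.Icc 1 b, u n ≤ C * a := calc
  ∑ n ∈ Finset.Icc 1 b, u n = ∑ n ∈ (Finset.Icc 1 b).filter (· ≤ a), u n := by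
    rw [Finset.sum_filter]
    refine Finset.sum_congr rfl fun n hn => ?_
    split_ifs with h
    · rfl
    · exact hblock n (by omega) (Finset.mem_Icc.1 hn).2
  _ ≤ ∑ n ∈ Finset.Icc 1 a, u n :=
    Finset.sum_le_sum_of_subset_of_nonneg (fun n hn => by
      simp only [Finset.mem_filter, Finset.mem_Icc] at hn ⊢
      omega) fun n _ _ => hu n
  _ ≤ C * a := sum_Icc_le_mul huC a

variable {a b : ℕ → ℕ}

theorem tendsto_average_of_eq_on_Ioc (hu : ∀ n, 0 ≤ u n) (huC : ∀ n, u n ≤ C)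
    (hab : ∀ k, a k ≤ b k) (hb : ∀ k, 0 < b k)
    (hratio : Tendsto (fun k => (a k : ℝ) / b k) atTop (𝓝 0))
    (hblock : ∀ k n, a k < n → n ≤ b k → u n = C) :
    Tendsto (fun k => 1 / (b k : ℝ) * ∑ n ∈ Finset.Icc 1 (b k), u n) atTop (𝓝 C) := by
  have hlower : Tendsto (fun k => C * (1 - (a k : ℝ) / b k)) atTop (𝓝 C) := by
    simpa using (hratio.const_sub 1).const_mul C
  refine tendsto_of_tendsto_of_tendsto_of_le_of_le hlower tendsto_const_nhds (fun k => ?_)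
    (fun k => ?_)
  all_goals have hbk : (0 : ℝ) < b k := by exact_mod_cast hb k
  · calc C * (1 - a k / b k) = 1 / b k * (C * (b k - a k)) := by field_simp
      _ ≤ _ := mul_le_mul_of_nonneg_left
          (mul_sub_le_sum_Icc_of_eq_on_Ioc hu (hab k) (hblock k)) (by positivity)
  · calc 1 / (b k : ℝ) * ∑ n ∈ Finset.Icc 1 (b k), u n ≤ 1 / b k * (C * b k) :=
          mul_le_mul_of_nonneg_left (sum_Icc_le_mul huC _) (by positivity)
      _ = C := by field_simp

theorem tendsto_average_zero_of_eq_zero_on_Ioc (hu : ∀ n, 0 ≤ u n) (huC : ∀ n, u n ≤ C)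
    (hratio : Tendsto (fun k => (a k : ℝ) / b k) atTop (𝓝 0))
    (hblock : ∀ k n, a k < n → n ≤ b k → u n = 0) :
    Tendsto (fun k => 1 / (b k : ℝ) * ∑ n ∈ Finset.Icc 1 (b k), u n) atTop (𝓝 0) := by
  refine tendsto_of_tendsto_of_tendsto_of_le_of_le tendsto_const_nhds
    (by simpa using hratio.const_mul C) (fun k => ?_) (fun k => ?_)
  · exact mul_nonneg (by positivity) (Finset.sum_nonneg fun n _ => hu n)
  · calc 1 / (b k : ℝ) * ∑ n ∈ Finset.Icc 1 (b k), u n ≤ 1 / b k * (C * a k) :=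
          mul_le_mul_of_nonneg_left (sum_Icc_le_mul_of_eq_zero_on_Ioc hu huC (hblock k))
            (by positivity)
      _ = C * (a k / b k) := by ring

theorem tendsto_average_oddBlocks {N : ℕ → ℕ} (hN : StrictMono N) (hN0 : ∀ j, 0 < N j)
    (hratio : Tendsto (fun j => (N j : ℝ) / N (j + 1)) atTop (𝓝 0)) (hu : ∀ n, 0 ≤ u n)
    (huC : ∀ n, u n ≤ C) (hE : ∀ n ∈ oddBlocks N, u n = C)
    (hEc : ∀ n, N 0 < n → n ∉ oddBlocks N → u n = 0) :
    Tendsto (fun k => 1 / (N (2 * k) : ℝ) * ∑ n ∈ Finset.Icc 1 (N (2 * k)), u n) atTop (𝓝 C) ∧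
      Tendsto (fun k => 1 / (N (2 * k + 1) : ℝ) * ∑ n ∈ Finset.Icc 1 (N (2 * k + 1)), u n)
        atTop (𝓝 0) := by
  constructor
  · rw [← tendsto_add_atTop_iff_nat 1]
    exact tendsto_average_of_eq_on_Ioc (a := fun k => N (2 * k + 1)) hu huC
      (fun k => hN.monotone (by omega)) (fun k => hN0 _)
      (hratio.comp (tendsto_atTop_mono (fun k => show k ≤ 2 * k + 1 by omega) tendsto_id))
      fun k n h₁ h₂ => hE n (mem_iUnion.2 ⟨k, h₁, h₂⟩)
  · exact tendsto_average_zero_of_eq_zero_on_Ioc (a := fun k => N (2 * k)) hu huC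
      (hratio.comp (tendsto_atTop_mono (fun k => show k ≤ 2 * k by omega) tendsto_id))
      fun k n h₁ h₂ => hEc n ((hN.monotone (Nat.zero_le _)).trans_lt h₁)
        (notMem_oddBlocks hN.monotone h₁ h₂)

end Averages

open Nat in
theorem tendsto_factorial_div_factorial_succ (c : ℕ) :
    Tendsto (fun j : ℕ => ((j + c)! : ℝ) / ((j + 1 + c)! : ℝ)) atTop (𝓝 0) := by
  refine (tendsto_one_div_add_atTop_nhds_zero_nat.comp (tendsto_add_atTop_nat c)).congr fun j => ?_
  rw [show j + 1 + c = j + c + 1 by ring, Nat.factorial_succ]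
  have := (j + c).factorial_pos
  simp only [Function.comp_apply]
  push_cast
  field_simp

/-- The infinite-measure construction underlying Theorem 1: a σ-finite measure space, an
automorphism `𝐒` and a conjugate `𝐓 = 𝐏 ∘ 𝐒 ∘ 𝐏⁻¹` whose averaged correlations over the sets
`𝐒^{p(n)} A ∩ 𝐓^{q(n)} A` tend to `μ(A)` along even scales and to `0` along odd scales. -/
theorem sigma_finite_construction (p q : ℕ → ℕ)
    (hp : Tendsto (fun n => (p (n + 1) : ℤ) - (p n : ℤ)) atTop atTop)
    (hq : Tendsto (fun n => (q (n + 1) : ℤ) - (q n : ℤ)) atTop atTop) :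
    ∃ (X : Type) (_ : MeasurableSpace X) (μ : Measure X), SigmaFinite μ ∧
      ∃ (S P : X ≃ᵐ X), MeasurePreserving S μ μ ∧ MeasurePreserving P μ μ ∧
        ∃ A : Set X, MeasurableSet A ∧ 0 < μ A ∧ μ A < ⊤ ∧
          ∃ N : ℕ → ℕ, StrictMono N ∧ (∀ j, 0 < N j) ∧
            Tendsto (fun j : ℕ => (N j : ℝ) / (N (j + 1) : ℝ)) atTop (𝓝 0) ∧
            Tendsto
              (fun k : ℕ => (1 / (N (2 * k) : ℝ)) *
                ∑ n ∈ Finset.Icc 1 (N (2 * k)),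
                  (μ ((⇑S)^[p n] '' A ∩ (⇑(P.symm.trans (S.trans P)))^[q n] '' A)).toReal)
              atTop (𝓝 ((μ A).toReal)) ∧
            Tendsto
              (fun k : ℕ => (1 / (N (2 * k + 1) : ℝ)) *
                ∑ n ∈ Finset.Icc 1 (N (2 * k + 1)),
                  (μ ((⇑S)^[p n] '' A ∩ (⇑(P.symm.trans (S.trans P)))^[q n] '' A)).toReal)
              atTop (𝓝 0) := by
  obtain ⟨n₀, ⟨hp_mono, hp_pos⟩, hq_mono, hq_pos⟩ :=
    ((eventually_strictMonoOn_Ici_and_pos hp).and (eventually_strictMonoOn_Ici_and_pos hq)).exists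
  set N : ℕ → ℕ := fun j => (j + (n₀ + 1)).factorial
  have hN_mono : StrictMono N := fun i j h => (Nat.factorial_lt (by omega)).2 (by omega)
  have hN_gt : ∀ j, n₀ < N j := fun j => (Nat.self_le_factorial _).trans_lt' (by omega)
  have hE : oddBlocks N ⊆ Ici n₀ := iUnion_subset fun k n hn => (hN_gt _).le.trans hn.1.le
  obtain ⟨σ, hσ0, hσ⟩ := exists_perm_apply_eq_iff_mem hp_mono.injOn hq_mono.injOn
    (fun n hn => (hp_pos n hn).ne') (fun n hn => (hq_pos n hn).ne') hE
  set P : ℤ × ℤ ≃ᵐ ℤ × ℤ := .ofDiscrete σ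
  have hcorr (n : ℕ) : (Measure.count ((⇑shiftFst)^[p n] '' {0} ∩
      (⇑(P.symm.trans (shiftFst.trans P)))^[q n] '' {0})).toReal =
      if σ ((q n : ℤ), 1) = ((p n : ℤ), 0) then 1 else 0 := by
    rw [count_shiftFst_iterate_inter_conj_iterate P hσ0, apply_ite ENNReal.toReal,
      ENNReal.toReal_one, ENNReal.toReal_zero]
    rfl
  refine ⟨ℤ × ℤ, inferInstance, .count, inferInstance, shiftFst, P,
    shiftFst.measurePreserving_count, P.measurePreserving_count, {0}, measurableSet_singleton 0,
    by simp, by simp, N, hN_mono, fun j => Nat.factorial_pos _,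
    tendsto_factorial_div_factorial_succ _, ?_⟩
  simp only [hcorr, Measure.count_singleton, ENNReal.toReal_one]
  exact tendsto_average_oddBlocks hN_mono (fun j => Nat.factorial_pos _)
    (tendsto_factorial_div_factorial_succ _) (fun n => by split_ifs <;> norm_num)
    (fun n => by split_ifs <;> norm_num) (fun n hn => if_pos ((hσ n (hE hn)).2 hn))
    fun n hn hnE => if_neg fun h => hnE ((hσ n ((hN_gt 0).le.trans hn.le)).1 h)
end

section
/- Let (X, μ) be a probability space, let T and R be invertible measure-preserving transformations of (X, μ), and set S = R⁻¹ ∘ T ∘ R. Let D ⊆ X be a measurable set such that μ((T^{-n}(R(T^n D))) Δ D) → 0 as n → ∞. Then μ(S^n D ∩ T^n D) → μ(R D ∩ D) as n → ∞. In particular, if μ(R D ∩ D) = 0, then μ(S^n D ∩ T^n D) → 0. -/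
/-!
Conjugating by `R` and then by `T⁻ⁿ`, both measure preserving, turns `Sⁿ D ∩ Tⁿ D` into
`R D ∩ T⁻ⁿ R Tⁿ D`, a set of the same measure. The homoclinic hypothesis says that
`T⁻ⁿ R Tⁿ D` converges to `D` in measure, and intersecting with the fixed set `R D` moves the
measure by at most the measure of the symmetric difference.
-/

open MeasureTheory Filter Topology Function Set
open scoped symmDiff

namespace MeasureTheory

variable {α : Type*} [MeasurableSpace α] {μ : Measure α}

theorem abs_measureReal_inter_sub_le_measureReal_symmDiff [IsFiniteMeasure μ] (s t u : Set α) :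
    |μ.real (s ∩ t) - μ.real (s ∩ u)| ≤ μ.real (t ∆ u) := by
  have hsub : (s ∩ t) ∆ (s ∩ u) ⊆ t ∆ u := by
    rw [← inter_symmDiff_distrib_left]
    exact inter_subset_right
  -- the triangle inequality for `∆` through `⊥ = ∅`, in both directions
  have htu := measureReal_symmDiff_le (μ := μ) (s := s ∩ t) (t := s ∩ u) ⊥
  have hut := measureReal_symmDiff_le (μ := μ) (s := s ∩ u) (t := s ∩ t) ⊥
  simp only [symmDiff_bot, symmDiff_comm (s ∩ u) (s ∩ t)] at htu hut
  have hmono : μ.real ((s ∩ t) ∆ (s ∩ u)) ≤ μ.real (t ∆ u) := measureReal_mono hsub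
  exact abs_sub_le_iff.2 ⟨by linarith, by linarith⟩

namespace MeasurePreserving

variable {β : Type*} [MeasurableSpace β] {ν : Measure β}

theorem measure_image_equiv {e : α ≃ᵐ β} (he : MeasurePreserving e μ ν) (s : Set α) :
    ν (e '' s) = μ s := by
  rw [e.image_eq_preimage_symm]
  exact he.symm.measure_preimage_equiv s

theorem measure_image_iterate_equiv {e : α ≃ᵐ α} (he : MeasurePreserving e μ μ) (n : ℕ)
    (s : Set α) : μ (e^[n] '' s) = μ s := by
  induction n with
  | zero => simp
  | succ n ih => rw [iterate_succ', image_comp, he.measure_image_equiv, ih]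

end MeasurePreserving

section Conjugation

variable {S T R : α ≃ᵐ α}

theorem measure_image_iterate_inter_of_semiconj (hT : MeasurePreserving T μ μ)
    (hR : MeasurePreserving R μ μ) (hRST : Semiconj R S T) (n : ℕ) (s t : Set α) :
    μ (S^[n] '' s ∩ T^[n] '' t) = μ (R '' s ∩ T.symm^[n] '' (R '' (T^[n] '' t))) :=
  calc μ (S^[n] '' s ∩ T^[n] '' t)
      = μ (T.symm^[n] '' (R '' (S^[n] '' s ∩ T^[n] '' t))) := by
        rw [(hT.symm T).measure_image_iterate_equiv, hR.measure_image_equiv]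
    _ = μ (R '' s ∩ T.symm^[n] '' (R '' (T^[n] '' t))) := by
        rw [image_inter R.injective, (hRST.iterate_right n).set_image s,
          image_inter (T.symm.injective.iterate n),
          (LeftInverse.iterate T.symm_apply_apply n).image_image]

theorem tendsto_measureReal_image_iterate_inter_of_semiconj [IsFiniteMeasure μ]
    (hT : MeasurePreserving T μ μ) (hR : MeasurePreserving R μ μ) (hRST : Semiconj R S T)
    {s : Set α} (hhom : Tendsto (fun n ↦ μ.real ((T.symm^[n] '' (R '' (T^[n] '' s))) ∆ s))
      atTop (𝓝 0)) :
    Tendsto (fun n ↦ μ.real (S^[n] '' s ∩ T^[n] '' s)) atTop (𝓝 (μ.real (R '' s ∩ s))) := by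
  refine tendsto_sub_nhds_zero_iff.1 (squeeze_zero_norm (fun n ↦ ?_) hhom)
  rw [Real.norm_eq_abs, measureReal_def, measure_image_iterate_inter_of_semiconj hT hR hRST,
    ← measureReal_def]
  exact abs_measureReal_inter_sub_le_measureReal_symmDiff (μ := μ) _ _ _

end Conjugation

end MeasureTheory

theorem homoclinic_correlation_limit_general {X : Type*} [MeasurableSpace X] (μ : Measure X)
    [IsProbabilityMeasure μ] (T R : X ≃ᵐ X)
    (hT : MeasurePreserving T μ μ) (hR : MeasurePreserving R μ μ)
    (D : Set X)
    (hhom : Tendsto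
      (fun n : ℕ => (μ (symmDiff ((⇑T.symm)^[n] '' (⇑R '' ((⇑T)^[n] '' D))) D)).toReal)
      atTop (𝓝 0)) :
    Tendsto
      (fun n : ℕ => (μ ((⇑(R.trans (T.trans R.symm)))^[n] '' D ∩ (⇑T)^[n] '' D)).toReal)
      atTop (𝓝 ((μ (⇑R '' D ∩ D)).toReal)) ∧
    (μ (⇑R '' D ∩ D) = 0 →
      Tendsto
        (fun n : ℕ => (μ ((⇑(R.trans (T.trans R.symm)))^[n] '' D ∩ (⇑T)^[n] '' D)).toReal)
        atTop (𝓝 0)) := by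
  have hRST : Semiconj R (R.trans (T.trans R.symm)) T := fun x ↦ by simp
  have hcorr := tendsto_measureReal_image_iterate_inter_of_semiconj hT hR hRST hhom
  exact ⟨hcorr, fun hzero ↦ by simpa [measureReal_def, hzero] using hcorr⟩

/-- If `R` is homoclinic for `T` on `D`, i.e. `μ((T^{-n} R T^n D) Δ D) → 0`, then for
`S = R⁻¹ ∘ T ∘ R` the joint correlations satisfy `μ(S^n D ∩ T^n D) → μ(R D ∩ D)`; in
particular, if `μ(R D ∩ D) = 0` then `μ(S^n D ∩ T^n D) → 0`. -/
theorem homoclinic_correlation_limit {X : Type*} [MeasurableSpace X] (μ : Measure X)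
    [IsProbabilityMeasure μ] (T R : X ≃ᵐ X)
    (hT : MeasurePreserving T μ μ) (hR : MeasurePreserving R μ μ)
    (D : Set X) (hD : MeasurableSet D)
    (hhom : Tendsto
      (fun n : ℕ => (μ (symmDiff ((⇑T.symm)^[n] '' (⇑R '' ((⇑T)^[n] '' D))) D)).toReal)
      atTop (𝓝 0)) :
    Tendsto
      (fun n : ℕ => (μ ((⇑(R.trans (T.trans R.symm)))^[n] '' D ∩ (⇑T)^[n] '' D)).toReal)
      atTop (𝓝 ((μ (⇑R '' D ∩ D)).toReal)) ∧
    (μ (⇑R '' D ∩ D) = 0 →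
      Tendsto
        (fun n : ℕ => (μ ((⇑(R.trans (T.trans R.symm)))^[n] '' D ∩ (⇑T)^[n] '' D)).toReal)
        atTop (𝓝 0)) :=
  homoclinic_correlation_limit_general μ T R hT hR D hhom
end

section
/- Let (X, μ) be a probability space, let S and T be invertible measure-preserving transformations of (X, μ), and let D ⊆ X be measurable with Σ_{n=1}^{∞} μ(S^n D ∩ T^n D) < μ(D). Then there exists a measurable set D' ⊆ D with μ(D') > 0 such that S^n D' ∩ T^n D' = ∅ for every n ≥ 1. -/
open MeasureTheory

/-! Remove from `D` every point `x` with `S^n x ∈ T^n D` for some `n ≥ 1`. Since `S^n` is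
measure preserving and injective, the points removed for a given `n` have measure
`μ(S^n D ∩ T^n D)`, so less than `μ(D)` is removed in total; and no point that is left can have
`S^n x = T^n y` with `y` left as well. -/

lemma MeasurableEmbedding.iterate {X : Type*} [MeasurableSpace X] {f : X → X}
    (hf : MeasurableEmbedding f) : ∀ n : ℕ, MeasurableEmbedding f^[n]
  | 0 => MeasurableEmbedding.id
  | n + 1 => (hf.iterate n).comp hf

lemma MeasureTheory.MeasurePreserving.measure_inter_preimage {X Y : Type*} [MeasurableSpace X]
    [MeasurableSpace Y] {μ : Measure X} {ν : Measure Y} {f : X → Y}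
    (hf : MeasurePreserving f μ ν) (hfe : MeasurableEmbedding f) (s : Set X) (t : Set Y) :
    μ (s ∩ f ⁻¹' t) = ν (f '' s ∩ t) := by
  rw [← hf.measure_preimage_emb hfe, Set.preimage_inter, hfe.injective.preimage_image]

theorem exists_subset_pos_measure_forall_image_inter_eq_empty {X Y ι : Type*}
    [MeasurableSpace X] [MeasurableSpace Y] [Countable ι] {μ : Measure X} {ν : Measure Y}
    {φ ψ : ι → X → Y} (hφ : ∀ i, MeasurePreserving (φ i) μ ν)
    (hφe : ∀ i, MeasurableEmbedding (φ i)) (hψe : ∀ i, MeasurableEmbedding (ψ i))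
    {D : Set X} (hD : MeasurableSet D) (hsum : ∑' i, ν (φ i '' D ∩ ψ i '' D) < μ D) :
    ∃ D' ⊆ D, MeasurableSet D' ∧ 0 < μ D' ∧ ∀ i, φ i '' D' ∩ ψ i '' D' = ∅ := by
  set bad := ⋃ i, φ i ⁻¹' (ψ i '' D)
  have hbad : μ (D ∩ bad) ≤ ∑' i, ν (φ i '' D ∩ ψ i '' D) := by
    simp only [bad, Set.inter_iUnion, ← (hφ _).measure_inter_preimage (hφe _)]
    exact measure_iUnion_le _
  refine ⟨D \ bad, Set.sdiff_subset, hD.diff ?_, ?_, ?_⟩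
  · exact .iUnion fun i ↦ (hφe i).measurable ((hψe i).measurableSet_image.2 hD)
  · refine pos_iff_ne_zero.2 fun h ↦ hsum.not_ge ?_
    have hD_le : μ D ≤ μ (D ∩ bad) := by simpa [h] using measure_le_inter_add_sdiff μ D bad
    exact hD_le.trans hbad
  · intro i
    refine Set.eq_empty_of_forall_notMem ?_
    rintro _ ⟨⟨a, ⟨-, ha⟩, rfl⟩, ⟨b, ⟨hb, -⟩, hab⟩⟩
    exact ha (Set.mem_iUnion.2 ⟨i, b, hb, hab⟩)

theorem extraction_lemma_general {X : Type*} [MeasurableSpace X] (μ : Measure X)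
    (S T : X ≃ᵐ X)
    (hS : MeasurePreserving S μ μ)
    (D : Set X) (hD : MeasurableSet D)
    (hsum : ∑' n : ℕ, μ ((⇑S)^[n + 1] '' D ∩ (⇑T)^[n + 1] '' D) < μ D) :
    ∃ D' : Set X, D' ⊆ D ∧ MeasurableSet D' ∧ 0 < μ D' ∧
      ∀ n : ℕ, 1 ≤ n → (⇑S)^[n] '' D' ∩ (⇑T)^[n] '' D' = ∅ := by
  obtain ⟨D', hD'D, hD', hpos, hdisj⟩ :=
    exists_subset_pos_measure_forall_image_inter_eq_empty (fun n ↦ hS.iterate (n + 1))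
      (fun n ↦ S.measurableEmbedding.iterate (n + 1))
      (fun n ↦ T.measurableEmbedding.iterate (n + 1)) hD hsum
  refine ⟨D', hD'D, hD', hpos, fun n hn ↦ ?_⟩
  obtain ⟨m, rfl⟩ := Nat.exists_eq_add_of_le' hn
  exact hdisj m

/-- The extraction lemma: if the total joint recurrence `Σ_{n≥1} μ(S^n D ∩ T^n D)` of `D`
under the pair `(S, T)` is smaller than `μ(D)`, then some positive-measure subset of `D` is
never jointly recurrent. -/
theorem extraction_lemma {X : Type*} [MeasurableSpace X] (μ : Measure X)
    [IsProbabilityMeasure μ] (S T : X ≃ᵐ X)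
    (hS : MeasurePreserving S μ μ) (hT : MeasurePreserving T μ μ)
    (D : Set X) (hD : MeasurableSet D)
    (hsum : ∑' n : ℕ, μ ((⇑S)^[n + 1] '' D ∩ (⇑T)^[n + 1] '' D) < μ D) :
    ∃ D' : Set X, D' ⊆ D ∧ MeasurableSet D' ∧ 0 < μ D' ∧
      ∀ n : ℕ, 1 ≤ n → (⇑S)^[n] '' D' ∩ (⇑T)^[n] '' D' = ∅ :=
  extraction_lemma_general μ S T hS D hD hsum
end

section
/- There exist a probability space (X, μ), invertible measure-preserving transformations S and T of (X, μ), and a measurable set D ⊆ X with μ(D) > 0 such that μ(S^n D ∩ T^n D) = 0 for every integer n ≥ 1. -/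
/-!
Let `T` be the left shift on `(ℤ/2)^ℤ` with its Haar (Bernoulli) measure and `S = T ∘ τ`, where
`τ` flips the coordinate `0`. Then `Sⁿ = Tⁿ ∘ (· + 1_{[0,n)})`, so for `D = {x | x 0 = 0}` we get
`Sⁿ D = Tⁿ (D + 1_{[0,n)})`. For `n ≥ 1` the set `D + 1_{[0,n)} = {x | x 0 = 1}` is disjoint from `D`,
and `Tⁿ` is injective, so `Sⁿ D ∩ Tⁿ D = ∅`.
-/

open MeasureTheory Set Function

theorem MeasureTheory.Measure.isProbabilityMeasure_addHaarMeasure_top {G : Type*} [AddGroup G]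
    [TopologicalSpace G] [IsTopologicalAddGroup G] [CompactSpace G] [MeasurableSpace G]
    [BorelSpace G] :
    IsProbabilityMeasure (addHaarMeasure (⊤ : TopologicalSpace.PositiveCompacts G)) :=
  ⟨by simpa using addHaarMeasure_self (K₀ := (⊤ : TopologicalSpace.PositiveCompacts G))⟩

namespace LinearNonrecurrence

variable {α : Type*}

lemma image_add_inter_eq_empty [AddGroup α] {c : ℤ → α} (hc : c 0 ≠ 0) :
    (· + c) '' {x : ℤ → α | x 0 = 0} ∩ {x | x 0 = 0} = ∅ := by
  rw [eq_empty_iff_forall_notMem]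
  rintro _ ⟨⟨x, hx, rfl⟩, hxc⟩
  simp_all

section Shift

variable [MeasurableSpace α]

def shift : (ℤ → α) ≃ᵐ (ℤ → α) where
  toFun x i := x (i + 1)
  invFun x i := x (i - 1)
  left_inv x := by funext i; simp
  right_inv x := by funext i; simp
  measurable_toFun := measurable_pi_lambda _ fun i => measurable_pi_apply _
  measurable_invFun := measurable_pi_lambda _ fun i => measurable_pi_apply _

lemma iterate_shift_apply (n : ℕ) (x : ℤ → α) (i : ℤ) :
    (⇑shift)^[n] x i = x (i + n) := by
  induction n generalizing i with
  | zero => simp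
  | succ n ih =>
    rw [iterate_succ_apply', show shift ((⇑shift)^[n] x) i = (⇑shift)^[n] x (i + 1) from rfl, ih]
    push_cast
    ring_nf

variable [AddGroup α] [MeasurableAdd α]

def perturbedShift (a : α) : (ℤ → α) ≃ᵐ (ℤ → α) :=
  (MeasurableEquiv.addRight (Pi.single 0 a : ℤ → α)).trans shift

lemma iterate_perturbedShift (a : α) (n : ℕ) :
    (⇑(perturbedShift a))^[n] = (⇑shift)^[n] ∘ (· + (Ico 0 (n : ℤ)).indicator (fun _ => a)) := by
  induction n with
  | zero => funext x i; simp
  | succ n ih =>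
    funext x i
    rw [iterate_succ_apply', ih]
    show (⇑shift)^[n] (x + _) (i + 1) + (Pi.single 0 a : ℤ → α) (i + 1) = _
    simp only [comp_apply, iterate_shift_apply, Pi.add_apply, add_assoc]
    congr 2
    · push_cast
      ring
    · simp only [indicator, Pi.single_apply, mem_Ico]
      split_ifs <;> push_cast at * <;> first | omega | simp

lemma image_iterate_perturbedShift_inter_eq_empty {a : α} (ha : a ≠ 0) {n : ℕ} (hn : 1 ≤ n) :
    (⇑(perturbedShift a))^[n] '' {x | x 0 = 0} ∩ (⇑shift)^[n] '' {x | x 0 = 0} = ∅ := by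
  rw [iterate_perturbedShift, image_comp, ← image_inter (shift.injective.iterate n),
    image_add_inter_eq_empty (by simp [indicator, ha]; omega), image_empty]

end Shift

section Haar

variable [AddGroup α] [TopologicalSpace α] [IsTopologicalAddGroup α] [CompactSpace α]
  [SecondCountableTopology α] [MeasurableSpace α] [BorelSpace α]
  (μ : Measure (ℤ → α)) [μ.IsAddHaarMeasure]

lemma measurePreserving_shift : MeasurePreserving shift μ μ :=
  AddMonoidHom.measurePreserving
    (f := { toFun := shift, map_zero' := rfl, map_add' := fun _ _ => rfl })
    (continuous_pi fun i => continuous_apply (i + 1)) shift.surjective rfl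

lemma measurePreserving_perturbedShift [μ.IsAddRightInvariant] (a : α) :
    MeasurePreserving (perturbedShift a) μ μ :=
  (measurePreserving_shift μ).comp (measurePreserving_add_right μ _)

end Haar

end LinearNonrecurrence

open LinearNonrecurrence

/-- Linear non-recurrence: there exist a probability space, invertible measure-preserving
transformations `S, T` and a measurable set `D` of positive measure such that
`μ(S^n D ∩ T^n D) = 0` for every `n ≥ 1`. -/
theorem linear_nonrecurrence :
    ∃ (X : Type) (_ : MeasurableSpace X) (μ : Measure X), IsProbabilityMeasure μ ∧
      ∃ (S T : X ≃ᵐ X), MeasurePreserving S μ μ ∧ MeasurePreserving T μ μ ∧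
        ∃ D : Set X, MeasurableSet D ∧ 0 < μ D ∧
          ∀ n : ℕ, 1 ≤ n → μ ((⇑S)^[n] '' D ∩ (⇑T)^[n] '' D) = 0 := by
  let μ := Measure.addHaarMeasure (⊤ : TopologicalSpace.PositiveCompacts (ℤ → ZMod 2))
  have hD : IsOpen {x : ℤ → ZMod 2 | x 0 = 0} :=
    (isOpen_discrete {0}).preimage (continuous_apply 0)
  refine ⟨ℤ → ZMod 2, inferInstance, μ, Measure.isProbabilityMeasure_addHaarMeasure_top,
    perturbedShift 1, shift, measurePreserving_perturbedShift μ 1, measurePreserving_shift μ,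
    {x | x 0 = 0}, hD.measurableSet, hD.measure_pos μ ⟨0, rfl⟩, fun n hn => ?_⟩
  rw [image_iterate_perturbedShift_inter_eq_empty one_ne_zero hn, measure_empty]
end
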